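/- Let k ≥ 1 be an integer, h > 0, and a ∈ ℝ. Denote the interface x* = a + h between the two adjacent cells I_i = [a, a+h] and I_{i+1} = [a+h, a+2h]. Let e : [a − (k−1)·h, a + (k+1)·h] → ℝ be 2k-times continuously differentiable. Let e⁻ be the value at x* of the reconstruction polynomial of e on the central stencil of 2k−1 cells centered on I_i (covering [a − (k−1)·h, a + k·h]), and let e⁺ be the value at x* of the reconstruction polynomial of e on the central stencil of 2k−1 cells centered on I_{i+1} (covering [a − (k−2)·h, a + (k+1)·h]). Then there exist ξ in the open interior of the first stencil interval, ξ′ in the open interior of the second stencil interval, and c strictly between ξ and ξ′ (if ξ ≠ ξ′), such that: (i) e⁻ − e⁺ = (−1)^k · h^{2k−1} · (k!·(k−1)!/(2k)!) · ( e^{(2k−1)}(ξ) + e^{(2k−1)}(ξ′) ), and (ii) e⁻ + e⁺ − 2·e(x*) = (−1)^{k+1} · h^{2k−1} · (k!·(k−1)!/(2k)!) · e^{(2k)}(c) · (ξ′ − ξ); in particular |e⁻ + e⁺ − 2·e(x*)| ≤ 2k · h^{2k} · (k!·(k−1)!/(2k)!) · sup_{[a−(k−1)h, a+(k+1)h]}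 |e^{(2k)}|. -/

import Mathlib

/-!
Let `U` be a primitive of `e`. A reconstruction polynomial `Q` interpolates `U` at the `2k`
interfaces of its stencil, so `e - Q'` at an interface is the error of the derivative of an
interpolant at a node. Adding to `Q` the multiple `a ω` of the nodal polynomial that also matches
`U'` at that node, the difference with `U` vanishes at the `2k` nodes; by Rolle its derivative
vanishes at `2k` points (the node included), so by iterated Rolle `U^(2k) = e^(2k-1)` equals
`(2k)! a` at some `ξ` of the stencil. Hence `e - Q' = e^(2k-1)(ξ) ω'(x*) / (2k)!`, and for
equispaced nodes `ω'(x*) = ± k! (k-1)! h^(2k-1)`, with opposite signs on the two stencils.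
Subtracting the two errors gives (i); adding them and applying the mean value theorem to
`e^(2k-1)` between `ξ` and `ξ'` gives (ii), and `|ξ' - ξ| ≤ 2kh` gives the bound.
-/

open Set Polynomial intervalIntegral Topology

theorem Polynomial.iterate_derivative_natDegree {R : Type*} [CommSemiring R] (p : R[X]) :
    derivative^[p.natDegree] p = C ((p.natDegree.factorial : R) * p.leadingCoeff) := by
  have hdeg : (derivative^[p.natDegree] p).natDegree ≤ 0 :=
    (natDegree_iterate_derivative p _).trans (Nat.sub_self _).le
  rw [eq_C_of_natDegree_le_zero hdeg, coeff_iterate_derivative, zero_add, Nat.descFactorial_self,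
    nsmul_eq_mul, leadingCoeff]

theorem Polynomial.contDiff_eval (p : ℝ[X]) (n : WithTop ℕ∞) : ContDiff ℝ n fun x => p.eval x := by
  simpa using p.contDiff_aeval (𝕜 := ℝ) n

theorem Polynomial.iteratedDerivWithin_eval {s : Set ℝ} (hs : UniqueDiffOn ℝ s) (p : ℝ[X]) (n : ℕ) :
    EqOn (iteratedDerivWithin n (fun x => p.eval x) s) (fun x => (derivative^[n] p).eval x) s := by
  induction n with
  | zero => intro x _; simp
  | succ n ih =>
    intro x hx
    rw [iteratedDerivWithin_succ, derivWithin_congr ih (ih hx), Polynomial.derivWithin _ (hs x hx),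
      Function.iterate_succ_apply']

open Finset in
theorem exists_finset_deriv_eq_zero {f : ℝ → ℝ} {u v : ℝ} (hf : ContinuousOn f (Icc u v))
    {Z : Finset ℝ} {n : ℕ} (hZ : Z.card = n + 1) (hZuv : ↑Z ⊆ Icc u v) (hfZ : ∀ z ∈ Z, f z = 0) :
    ∃ Z' : Finset ℝ, Z'.card = n ∧ ↑Z' ⊆ Ioo u v ∧ Disjoint Z Z' ∧ ∀ z ∈ Z', deriv f z = 0 := by
  set z := Z.orderEmbOfFin hZ
  have hzZ (i : Fin (n + 1)) : z i ∈ Z := Z.orderEmbOfFin_mem hZ i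
  have hzuv (i : Fin (n + 1)) : z i ∈ Icc u v := hZuv (hzZ i)
  have hrolle (i : Fin n) : ∃ w ∈ Ioo (z i.castSucc) (z i.succ), deriv f w = 0 :=
    exists_deriv_eq_zero (z.strictMono i.castSucc_lt_succ)
      (hf.mono (Icc_subset_Icc (hzuv _).1 (hzuv _).2))
      ((hfZ _ (hzZ _)).trans (hfZ _ (hzZ _)).symm)
  choose w hw hw0 using hrolle
  have hw_mono : StrictMono w := fun i i' hii' =>
    calc w i < z i.succ := (hw i).2
      _ ≤ z i'.castSucc := z.monotone (Fin.succ_le_castSucc_iff.2 hii')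
      _ < w i' := (hw i').1
  refine ⟨univ.image w, ?_, ?_, ?_, ?_⟩
  · rw [card_image_of_injective _ hw_mono.injective, card_univ, Fintype.card_fin]
  · simp only [coe_image, coe_univ, image_univ, range_subset_iff]
    exact fun i => ⟨(hzuv _).1.trans_lt (hw i).1, (hw i).2.trans_le (hzuv _).2⟩
  · rw [Finset.disjoint_left]
    intro x hx hxw
    obtain ⟨i, -, rfl⟩ := Finset.mem_image.1 hxw
    obtain ⟨j, hj⟩ : ∃ j, z j = w i := by
      rw [← Set.mem_range, Finset.range_orderEmbOfFin]; exact hx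
    have h1 : i.castSucc < j := z.lt_iff_lt.1 (hj ▸ (hw i).1)
    have h2 : j < i.succ := z.lt_iff_lt.1 (hj ▸ (hw i).2)
    simp only [Fin.lt_def, Fin.val_castSucc, Fin.val_succ] at h1 h2
    omega
  · simpa using hw0

theorem hasDerivAt_iteratedDerivWithin_Icc {lo hi : ℝ} {F : ℝ → ℝ} {N : ℕ}
    (hF : ContDiffOn ℝ N F (Icc lo hi)) {m : ℕ} (hm : m < N) {x : ℝ} (hx : x ∈ Ioo lo hi) :
    HasDerivAt (iteratedDerivWithin m F (Icc lo hi))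
      (iteratedDerivWithin (m + 1) F (Icc lo hi) x) x := by
  have hS : Icc lo hi ∈ 𝓝 x := Icc_mem_nhds hx.1 hx.2
  have hdiff := hF.differentiableOn_iteratedDerivWithin (by exact_mod_cast hm)
    (uniqueDiffOn_Icc (hx.1.trans hx.2)) x (Ioo_subset_Icc_self hx)
  rw [iteratedDerivWithin_succ, derivWithin_of_mem_nhds hS]
  exact (hdiff.differentiableAt hS).hasDerivAt

theorem exists_finset_iteratedDerivWithin_succ_eq_zero {lo hi u v : ℝ} (hlt : lo < hi)
    (huv : Icc u v ⊆ Icc lo hi) {F : ℝ → ℝ} {N : ℕ} (hF : ContDiffOn ℝ N F (Icc lo hi))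
    {m : ℕ} (hm : m < N) {Z : Finset ℝ} {n : ℕ} (hZ : Z.card = n + 1) (hZuv : ↑Z ⊆ Icc u v)
    (hZ0 : ∀ z ∈ Z, iteratedDerivWithin m F (Icc lo hi) z = 0) :
    ∃ Z' : Finset ℝ, Z'.card = n ∧ ↑Z' ⊆ Ioo u v ∧ Disjoint Z Z' ∧
      ∀ z ∈ Z', iteratedDerivWithin (m + 1) F (Icc lo hi) z = 0 := by
  have hcont : ContinuousOn (iteratedDerivWithin m F (Icc lo hi)) (Icc u v) :=
    (hF.continuousOn_iteratedDerivWithin (by exact_mod_cast hm.le)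
      (uniqueDiffOn_Icc hlt)).mono huv
  obtain ⟨Z', hZ', hZ'uv, hdisj, hZ'0⟩ := exists_finset_deriv_eq_zero hcont hZ hZuv hZ0
  refine ⟨Z', hZ', hZ'uv, hdisj, fun z hz => ?_⟩
  have hz' : z ∈ Ioo lo hi := by
    rw [← interior_Icc]; exact interior_mono huv (by rw [interior_Icc]; exact hZ'uv hz)
  rw [← (hasDerivAt_iteratedDerivWithin_Icc hF hm hz').deriv, hZ'0 z hz]

theorem exists_iteratedDerivWithin_eq_zero_of_card_zeros {lo hi u v : ℝ} (hlt : lo < hi)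
    (huv : Icc u v ⊆ Icc lo hi) {F : ℝ → ℝ} {N : ℕ} (hF : ContDiffOn ℝ N F (Icc lo hi))
    (c m : ℕ) (hmc : m + c < N) {Z : Finset ℝ} (hZ : Z.card = c + 2) (hZuv : ↑Z ⊆ Icc u v)
    (hZ0 : ∀ z ∈ Z, iteratedDerivWithin m F (Icc lo hi) z = 0) :
    ∃ ξ ∈ Ioo u v, iteratedDerivWithin (m + c + 1) F (Icc lo hi) ξ = 0 := by
  induction c generalizing m Z with
  | zero =>
    obtain ⟨Z', hZ', hZ'uv, -, hZ'0⟩ :=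
      exists_finset_iteratedDerivWithin_succ_eq_zero hlt huv hF (by omega) hZ hZuv hZ0
    obtain ⟨ξ, rfl⟩ := Finset.card_eq_one.1 hZ'
    exact ⟨ξ, hZ'uv (Finset.mem_singleton_self ξ), hZ'0 ξ (Finset.mem_singleton_self ξ)⟩
  | succ c ih =>
    obtain ⟨Z', hZ', hZ'uv, -, hZ'0⟩ :=
      exists_finset_iteratedDerivWithin_succ_eq_zero hlt huv hF (by omega) hZ hZuv hZ0
    obtain ⟨ξ, hξ, hξ0⟩ := ih (m + 1) (by omega) hZ' (hZ'uv.trans Ioo_subset_Icc_self) hZ'0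
    exact ⟨ξ, hξ, by rwa [show m + (c + 1) + 1 = m + 1 + c + 1 by omega]⟩

open Lagrange in
theorem exists_derivWithin_sub_eval_derivative_eq {lo hi u v : ℝ} (hlt : lo < hi)
    (huv : Icc u v ⊆ Icc lo hi) {n : ℕ} (hn : 1 ≤ n) {U : ℝ → ℝ}
    (hU : ContDiffOn ℝ (n + 1 : ℕ) U (Icc lo hi)) {ι : Type*} {s : Finset ι}
    {y : ι → ℝ} (hs : s.card = n + 1) (hy : InjOn y s) (hyuv : ∀ i ∈ s, y i ∈ Icc u v)
    {Q : ℝ[X]} (hQ : Q.natDegree ≤ n) (hQU : ∀ i ∈ s, Q.eval (y i) = U (y i)) {j : ι} (hj : j ∈ s) :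
    ∃ ξ ∈ Ioo u v, derivWithin U (Icc lo hi) (y j) - (derivative Q).eval (y j)
      = iteratedDerivWithin (n + 1) U (Icc lo hi) ξ / (n + 1).factorial
        * (derivative (nodal s y)).eval (y j) := by
  classical
  set S := Icc lo hi
  have hS : UniqueDiffOn ℝ S := uniqueDiffOn_Icc hlt
  set d := (derivative (nodal s y)).eval (y j)
  have hd : d ≠ 0 := by
    simpa [nodalWeight_eq_eval_derivative_nodal hj] using nodalWeight_ne_zero hy hj
  -- `P` is the interpolant of `U` at the nodes `y i` and, to first order, at `y j`
  set a := (derivWithin U S (y j) - (derivative Q).eval (y j)) / d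
  set P := Q + C a * nodal s y
  have hP : ContDiff ℝ (n + 1 : ℕ) fun x => P.eval x := P.contDiff_eval _
  set F := fun x => U x - P.eval x
  have hF : ContDiffOn ℝ (n + 1 : ℕ) F S := hU.sub hP.contDiffOn
  have hFy : ∀ z ∈ s.image y, iteratedDerivWithin 0 F S z = 0 := by
    simp only [Finset.mem_image, iteratedDerivWithin_zero]
    rintro _ ⟨i, hi, rfl⟩
    simp [F, P, hQU i hi, eval_nodal_at_node hi]
  have hF'y : iteratedDerivWithin 1 F S (y j) = 0 := by
    have hyj : y j ∈ S := huv (hyuv j hj)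
    have hU' : DifferentiableWithinAt ℝ U S (y j) := hU.differentiableOn (by simp) _ hyj
    rw [iteratedDerivWithin_one, derivWithin_fun_sub hU' P.differentiableWithinAt,
      P.derivWithin (hS _ hyj)]
    simp only [P, derivative_add, derivative_C_mul, eval_add, eval_mul, eval_C]
    change _ - (_ + a * d) = 0
    rw [div_mul_cancel₀ _ hd]
    ring
  have hZ : (s.image y).card = n + 1 := by rw [Finset.card_image_of_injOn hy, hs]
  have hZuv : ↑(s.image y) ⊆ Icc u v := by simpa [Set.subset_def] using hyuv
  obtain ⟨Z', hZ', hZ'uv, hdisj, hZ'0⟩ :=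
    exists_finset_iteratedDerivWithin_succ_eq_zero hlt huv hF (by omega) hZ hZuv hFy
  have hyj : y j ∉ Z' := Finset.disjoint_left.1 hdisj (Finset.mem_image_of_mem y hj)
  obtain ⟨ξ, hξ, hξ0⟩ := exists_iteratedDerivWithin_eq_zero_of_card_zeros hlt huv hF (n - 1) 1
    (by omega) (by rw [Finset.card_insert_of_notMem hyj, hZ']; omega)
    (by simpa [Set.insert_subset_iff] using ⟨hyuv j hj, hZ'uv.trans Ioo_subset_Icc_self⟩)
    (by
      intro z hz
      rcases Finset.mem_insert.1 hz with rfl | hz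
      exacts [hF'y, hZ'0 z hz])
  rw [show 1 + (n - 1) + 1 = n + 1 by omega] at hξ0
  have hξS : ξ ∈ S := huv (Ioo_subset_Icc_self hξ)
  have hPtop : derivative^[n + 1] P = C (a * (n + 1).factorial) := by
    have hω : (nodal s y).natDegree = n + 1 := by rw [natDegree_nodal, hs]
    rw [iterate_map_add, iterate_derivative_eq_zero (by omega), iterate_derivative_C_mul,
      ← hω, iterate_derivative_natDegree, nodal_monic.leadingCoeff, hω, zero_add, mul_one, ← C_mul]
  have htop : iteratedDerivWithin (n + 1) U S ξ = a * (n + 1).factorial := by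
    have hsub := iteratedDerivWithin_sub hξS hS (hU.contDiffWithinAt hξS) hP.contDiffWithinAt
    rw [show U - (fun x => P.eval x) = F from rfl, hξ0, P.iteratedDerivWithin_eval hS _ hξS,
      hPtop] at hsub
    simp only [eval_C] at hsub
    linarith
  refine ⟨ξ, hξ, ?_⟩
  rw [htop, mul_div_cancel_right₀ _ (by positivity), div_mul_cancel₀ _ hd]

theorem prod_range_natCast_sub (j : ℕ) : ∏ i ∈ Finset.range j, ((j : ℝ) - i) = j.factorial := by
  rw [← Nat.descFactorial_self, Nat.descFactorial_eq_prod_range, Nat.cast_prod]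
  exact Finset.prod_congr rfl fun i hi => by rw [Nat.cast_sub (Finset.mem_range.1 hi).le]

theorem prod_Ico_natCast_sub (j n : ℕ) :
    ∏ i ∈ Finset.Ico (j + 1) (n + 1), ((j : ℝ) - i) = (-1) ^ (n - j) * (n - j).factorial := by
  rw [Finset.prod_Ico_eq_prod_range, Nat.add_sub_add_right]
  calc ∏ i ∈ Finset.range (n - j), ((j : ℝ) - ↑(j + 1 + i))
      = ∏ i ∈ Finset.range (n - j), (-1 * ((i : ℝ) + 1)) :=
        Finset.prod_congr rfl fun i _ => by push_cast; ring
    _ = (-1) ^ (n - j) * (n - j).factorial := by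
        rw [Finset.prod_mul_distrib, Finset.prod_const, Finset.card_range,
          ← Finset.prod_range_add_one_eq_factorial]
        push_cast
        rfl

open Lagrange in
theorem eval_derivative_nodal_range_add_mul {n j : ℕ} (hj : j ≤ n) (b h : ℝ) :
    (derivative (nodal (Finset.range (n + 1)) fun i : ℕ => b + i * h)).eval (b + j * h)
      = (-1) ^ (n - j) * j.factorial * (n - j).factorial * h ^ n := by
  have hsplit : (Finset.range (n + 1)).erase j = Finset.range j ∪ Finset.Ico (j + 1) (n + 1) := by
    ext i; simp only [Finset.mem_erase, Finset.mem_range, Finset.mem_union, Finset.mem_Ico]; omega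
  have hdisj : Disjoint (Finset.range j) (Finset.Ico (j + 1) (n + 1)) := by
    rw [Finset.disjoint_left]; intro i; simp only [Finset.mem_range, Finset.mem_Ico]; omega
  rw [eval_nodal_derivative_eval_node_eq (v := fun i : ℕ => b + i * h)
    (Finset.mem_range.2 (by omega)), eval_nodal, hsplit, Finset.prod_union hdisj]
  simp_rw [show ∀ i : ℕ, b + j * h - (b + i * h) = ((j : ℝ) - i) * h from fun i => by ring]
  rw [Finset.prod_mul_distrib, Finset.prod_mul_distrib, prod_range_natCast_sub,
    prod_Ico_natCast_sub, Finset.prod_const, Finset.prod_const, Finset.card_range,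
    Nat.card_Ico, Nat.add_sub_add_right, ← pow_mul_pow_sub h hj]
  ring

theorem exists_hasDerivWithinAt_Icc_eq_integral {lo hi : ℝ} (hle : lo ≤ hi) {e : ℝ → ℝ}
    (he : ContinuousOn e (Icc lo hi)) {b : ℝ} (hb : b ∈ Icc lo hi) :
    ∃ U : ℝ → ℝ, ∀ x ∈ Icc lo hi,
      HasDerivWithinAt U (e x) (Icc lo hi) x ∧ U x = ∫ t in b..x, e t := by
  set ē := IccExtend hle ((Icc lo hi).domRestrict e)
  have hē : Continuous ē := (continuousOn_iff_continuous_domRestrict.1 he).Icc_extend'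
  have hēe : EqOn ē e (Icc lo hi) := fun x hx => IccExtend_of_mem hle _ hx
  refine ⟨fun x => ∫ t in b..x, ē t, fun x hx => ⟨?_, ?_⟩⟩
  · rw [← hēe hx]
    exact (hē.integral_hasStrictDerivAt b x).hasDerivAt.hasDerivWithinAt
  · exact integral_congr (hēe.mono (uIcc_subset_Icc hb hx))

theorem contDiffOn_succ_of_hasDerivWithinAt {s : Set ℝ} (hs : UniqueDiffOn ℝ s) {U e : ℝ → ℝ}
    (hU : ∀ x ∈ s, HasDerivWithinAt U (e x) s x) {n : ℕ} (he : ContDiffOn ℝ n e s) :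
    ContDiffOn ℝ (n + 1 : ℕ) U s := by
  rw [Nat.cast_add_one, contDiffOn_succ_iff_derivWithin hs]
  refine ⟨fun x hx => (hU x hx).differentiableWithinAt, by simp, he.congr fun x hx => ?_⟩
  exact (hU x hx).derivWithin (hs x hx)

theorem iteratedDerivWithin_succ_eqOn_of_hasDerivWithinAt {s : Set ℝ} (hs : UniqueDiffOn ℝ s)
    {U e : ℝ → ℝ} (hU : ∀ x ∈ s, HasDerivWithinAt U (e x) s x) (n : ℕ) :
    EqOn (iteratedDerivWithin (n + 1) U s) (iteratedDerivWithin n e s) s := by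
  rw [iteratedDerivWithin_succ']
  exact iteratedDerivWithin_congr fun x hx => (hU x hx).derivWithin (hs x hx)

theorem exists_sub_eval_derivative_eq_of_eval_eq_integral {lo hi b h : ℝ} (hlt : lo < hi)
    (hh : 0 < h) {n j : ℕ} (hn : 1 ≤ n) (hj : j ≤ n) (hb : lo ≤ b) (hbn : b + n * h ≤ hi)
    {e : ℝ → ℝ} (he : ContDiffOn ℝ n e (Icc lo hi)) {Q : ℝ[X]} (hQ : Q.natDegree ≤ n)
    (hQe : ∀ i ∈ Finset.range (n + 1), Q.eval (b + i * h) = ∫ t in b..(b + i * h), e t) :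
    ∃ ξ ∈ Ioo b (b + n * h), e (b + j * h) - (derivative Q).eval (b + j * h)
      = iteratedDerivWithin n e (Icc lo hi) ξ / (n + 1).factorial
        * ((-1) ^ (n - j) * j.factorial * (n - j).factorial * h ^ n) := by
  have hS : UniqueDiffOn ℝ (Icc lo hi) := uniqueDiffOn_Icc hlt
  have hsub : Icc b (b + n * h) ⊆ Icc lo hi := Icc_subset_Icc hb hbn
  have hnodes : ∀ i ∈ Finset.range (n + 1), b + i * h ∈ Icc b (b + n * h) := fun i hi => by
    have : (i : ℝ) ≤ n := by exact_mod_cast Finset.mem_range_succ_iff.1 hi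
    constructor <;> nlinarith
  have hinj : InjOn (fun i : ℕ => b + i * h) (Finset.range (n + 1)) := fun i _ i' _ hii' => by
    simpa [hh.ne'] using hii'
  obtain ⟨U, hU⟩ := exists_hasDerivWithinAt_Icc_eq_integral hlt.le he.continuousOn
    (hsub (left_mem_Icc.2 (le_add_of_nonneg_right (by positivity))))
  have hU' : ∀ x ∈ Icc lo hi, HasDerivWithinAt U (e x) (Icc lo hi) x := fun x hx => (hU x hx).1
  obtain ⟨ξ, hξ, hξeq⟩ := exists_derivWithin_sub_eval_derivative_eq hlt hsub hn
    (contDiffOn_succ_of_hasDerivWithinAt hS hU' he) (Finset.card_range _) hinj hnodes hQ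
    (fun i hi => by rw [hQe i hi, (hU _ (hsub (hnodes i hi))).2])
    (Finset.mem_range_succ_iff.2 hj)
  have hyj := hsub (hnodes j (Finset.mem_range_succ_iff.2 hj))
  refine ⟨ξ, hξ, ?_⟩
  rwa [(hU' _ hyj).derivWithin (hS _ hyj),
    iteratedDerivWithin_succ_eqOn_of_hasDerivWithinAt hS hU' n (hsub (Ioo_subset_Icc_self hξ)),
    eval_derivative_nodal_range_add_mul hj] at hξeq

theorem exists_mem_uIcc_sub_eq_mul_sub {f f' : ℝ → ℝ} {x y : ℝ} (hf : ContinuousOn f (uIcc x y))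
    (hf' : ∀ z ∈ Ioo (min x y) (max x y), HasDerivAt f (f' z) z) :
    ∃ c ∈ uIcc x y, (x ≠ y → c ∈ Ioo (min x y) (max x y)) ∧ f y - f x = f' c * (y - x) := by
  rcases eq_or_ne x y with rfl | hxy
  · exact ⟨x, left_mem_uIcc, fun h => absurd rfl h, by ring⟩
  obtain ⟨c, hc, hslope⟩ := exists_hasDerivAt_eq_slope f f' (min_lt_max.2 hxy) hf hf'
  refine ⟨c, Ioo_subset_Icc_self hc, fun _ => hc, ?_⟩
  rcases hxy.lt_or_gt with hlt | hlt
  · rw [hslope, min_eq_left hlt.le, max_eq_right hlt.le, div_mul_cancel₀ _ (sub_ne_zero.2 hlt.ne')]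
  · rw [hslope, min_eq_right hlt.le, max_eq_left hlt.le]
    field_simp [sub_ne_zero.2 hlt.ne']
    ring

theorem exists_iteratedDerivWithin_sub_eq_mul_sub {lo hi : ℝ} (hlt : lo < hi) {F : ℝ → ℝ}
    {N m : ℕ} (hF : ContDiffOn ℝ N F (Icc lo hi)) (hm : m < N) {x y : ℝ} (hx : x ∈ Icc lo hi)
    (hy : y ∈ Icc lo hi) :
    ∃ c ∈ uIcc x y, (x ≠ y → c ∈ Ioo (min x y) (max x y)) ∧
      iteratedDerivWithin m F (Icc lo hi) y - iteratedDerivWithin m F (Icc lo hi) x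
        = iteratedDerivWithin (m + 1) F (Icc lo hi) c * (y - x) :=
  exists_mem_uIcc_sub_eq_mul_sub
    ((hF.continuousOn_iteratedDerivWithin (by exact_mod_cast hm.le) (uniqueDiffOn_Icc hlt)).mono
      (uIcc_subset_Icc hx hy))
    fun _ hz => hasDerivAt_iteratedDerivWithin_Icc hF hm
      ⟨(le_min hx.1 hy.1).trans_lt hz.1, hz.2.trans_le (max_le hx.2 hy.2)⟩

theorem abs_le_sSup_image_abs {f : ℝ → ℝ} {lo hi : ℝ} (hf : ContinuousOn f (Icc lo hi)) {x : ℝ}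
    (hx : x ∈ Icc lo hi) : |f x| ≤ sSup ((fun y => |f y|) '' Icc lo hi) :=
  le_csSup (isCompact_Icc.image_of_continuousOn hf.abs).bddAbove (mem_image_of_mem _ hx)

theorem exists_interface_reconstruction_errors {k : ℕ} (hk : 1 ≤ k) {h a : ℝ} (hh : 0 < h)
    {e : ℝ → ℝ}
    (he : ContDiffOn ℝ (2 * k - 1 : ℕ) e (Icc (a - ((k : ℝ) - 1) * h) (a + ((k : ℝ) + 1) * h)))
    {Q₁ Q₂ : ℝ[X]} (hdeg₁ : Q₁.natDegree ≤ 2 * k - 1) (hdeg₂ : Q₂.natDegree ≤ 2 * k - 1)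
    (hinterp₁ : ∀ j ∈ Finset.range (2 * k),
      Q₁.eval (a - ((k : ℝ) - 1) * h + j * h)
        = ∫ s in (a - ((k : ℝ) - 1) * h)..(a - ((k : ℝ) - 1) * h + j * h), e s)
    (hinterp₂ : ∀ j ∈ Finset.range (2 * k),
      Q₂.eval (a - ((k : ℝ) - 2) * h + j * h)
        = ∫ s in (a - ((k : ℝ) - 2) * h)..(a - ((k : ℝ) - 2) * h + j * h), e s) :
    ∃ ξ ∈ Ioo (a - ((k : ℝ) - 1) * h) (a + k * h),
    ∃ ξ' ∈ Ioo (a - ((k : ℝ) - 2) * h) (a + ((k : ℝ) + 1) * h),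
      (derivative Q₁).eval (a + h) - e (a + h)
        = (-1) ^ k * h ^ (2 * k - 1) * (k.factorial * (k - 1).factorial / (2 * k).factorial)
          * iteratedDerivWithin (2 * k - 1) e
              (Icc (a - ((k : ℝ) - 1) * h) (a + ((k : ℝ) + 1) * h)) ξ ∧
      (derivative Q₂).eval (a + h) - e (a + h)
        = -((-1) ^ k * h ^ (2 * k - 1) * (k.factorial * (k - 1).factorial / (2 * k).factorial)
          * iteratedDerivWithin (2 * k - 1) e
              (Icc (a - ((k : ℝ) - 1) * h) (a + ((k : ℝ) + 1) * h)) ξ') := by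
  set n := 2 * k - 1 with hn
  have h2k : 2 * k = n + 1 := by omega
  rw [h2k] at hinterp₁ hinterp₂ ⊢
  have hnk : (n : ℝ) = 2 * k - 1 := by rw [hn, Nat.cast_sub (by omega)]; push_cast; ring
  have hk' : (1 : ℝ) ≤ k := by exact_mod_cast hk
  have hlt : a - ((k : ℝ) - 1) * h < a + ((k : ℝ) + 1) * h := by nlinarith
  -- the interface `a + h` is node `k` of the first stencil and node `k - 1` of the second
  obtain ⟨ξ, hξ, h₁⟩ := exists_sub_eval_derivative_eq_of_eval_eq_integral (j := k) hlt hh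
    (by omega) (by omega) le_rfl (by rw [hnk]; nlinarith) he hdeg₁ hinterp₁
  obtain ⟨ξ', hξ', h₂⟩ := exists_sub_eval_derivative_eq_of_eval_eq_integral (j := k - 1) hlt hh
    (by omega) (by omega) (by nlinarith) (by rw [hnk]; nlinarith) he hdeg₂ hinterp₂
  rw [show a - ((k : ℝ) - 1) * h + k * h = a + h by ring, show n - k = k - 1 by omega] at h₁
  rw [show a - ((k : ℝ) - 2) * h + ((k - 1 : ℕ) : ℝ) * h = a + h by
    rw [Nat.cast_sub hk]; push_cast; ring, show n - (k - 1) = k by omega] at h₂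
  rw [show a - ((k : ℝ) - 1) * h + n * h = a + k * h by rw [hnk]; ring] at hξ
  rw [show a - ((k : ℝ) - 2) * h + n * h = a + (k + 1) * h by rw [hnk]; ring] at hξ'
  have hsign : (-1 : ℝ) ^ k = -(-1) ^ (k - 1) := by
    obtain ⟨m, rfl⟩ := Nat.exists_eq_add_of_le' hk; simp [pow_succ]
  refine ⟨ξ, hξ, ξ', hξ', ?_, ?_⟩
  · linear_combination -h₁ - (h ^ n * (k.factorial * (k - 1).factorial / (n + 1).factorial)
      * iteratedDerivWithin n e (Icc (a - ((k : ℝ) - 1) * h) (a + ((k : ℝ) + 1) * h)) ξ) * hsign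
  · linear_combination -h₂

/-- Leading error of the two interface reconstructions `e⁻, e⁺` entering the
Lax–Friedrichs flux at the interface `x* = a + h` between two adjacent cells,
each obtained from a central stencil of `2k - 1` cells. -/
theorem interface_reconstruction_difference_and_sum_error
    (k : ℕ) (hk : 1 ≤ k) (h a : ℝ) (hh : 0 < h)
    (e : ℝ → ℝ)
    (he : ContDiffOn ℝ (2 * k) e (Icc (a - ((k : ℝ) - 1) * h) (a + ((k : ℝ) + 1) * h)))
    (Q₁ Q₂ : Polynomial ℝ)
    (hdeg₁ : Q₁.natDegree ≤ 2 * k - 1) (hdeg₂ : Q₂.natDegree ≤ 2 * k - 1)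
    (hinterp₁ : ∀ j ∈ Finset.range (2 * k),
      Q₁.eval (a - ((k : ℝ) - 1) * h + j * h)
        = ∫ s in (a - ((k : ℝ) - 1) * h)..(a - ((k : ℝ) - 1) * h + j * h), e s)
    (hinterp₂ : ∀ j ∈ Finset.range (2 * k),
      Q₂.eval (a - ((k : ℝ) - 2) * h + j * h)
        = ∫ s in (a - ((k : ℝ) - 2) * h)..(a - ((k : ℝ) - 2) * h + j * h), e s) :
    ∃ ξ ∈ Ioo (a - ((k : ℝ) - 1) * h) (a + k * h),
    ∃ ξ' ∈ Ioo (a - ((k : ℝ) - 2) * h) (a + ((k : ℝ) + 1) * h),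
    ∃ c : ℝ,
      (ξ ≠ ξ' → c ∈ Ioo (min ξ ξ') (max ξ ξ')) ∧
      (Polynomial.derivative Q₁).eval (a + h) - (Polynomial.derivative Q₂).eval (a + h)
        = (-1 : ℝ) ^ k * h ^ (2 * k - 1)
            * ((Nat.factorial k : ℝ) * (Nat.factorial (k - 1)) / (Nat.factorial (2 * k)))
            * (iteratedDerivWithin (2 * k - 1) e
                  (Icc (a - ((k : ℝ) - 1) * h) (a + ((k : ℝ) + 1) * h)) ξ
                + iteratedDerivWithin (2 * k - 1) e
                  (Icc (a - ((k : ℝ) - 1) * h) (a + ((k : ℝ) + 1) * h)) ξ') ∧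
      (Polynomial.derivative Q₁).eval (a + h) + (Polynomial.derivative Q₂).eval (a + h)
          - 2 * e (a + h)
        = (-1 : ℝ) ^ (k + 1) * h ^ (2 * k - 1)
            * ((Nat.factorial k : ℝ) * (Nat.factorial (k - 1)) / (Nat.factorial (2 * k)))
            * iteratedDerivWithin (2 * k) e
                (Icc (a - ((k : ℝ) - 1) * h) (a + ((k : ℝ) + 1) * h)) c
            * (ξ' - ξ) ∧
      |(Polynomial.derivative Q₁).eval (a + h) + (Polynomial.derivative Q₂).eval (a + h)
          - 2 * e (a + h)|
        ≤ 2 * k * h ^ (2 * k)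
            * ((Nat.factorial k : ℝ) * (Nat.factorial (k - 1)) / (Nat.factorial (2 * k)))
            * sSup ((fun x => |iteratedDerivWithin (2 * k) e
                (Icc (a - ((k : ℝ) - 1) * h) (a + ((k : ℝ) + 1) * h)) x|) ''
                Icc (a - ((k : ℝ) - 1) * h) (a + ((k : ℝ) + 1) * h)) := by
  set S := Icc (a - ((k : ℝ) - 1) * h) (a + ((k : ℝ) + 1) * h)
  have hk' : (1 : ℝ) ≤ k := by exact_mod_cast hk
  have hlt : a - ((k : ℝ) - 1) * h < a + ((k : ℝ) + 1) * h := by nlinarith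
  replace he : ContDiffOn ℝ (2 * k : ℕ) e S := by exact_mod_cast he
  obtain ⟨ξ, hξ, ξ', hξ', h₁, h₂⟩ := exists_interface_reconstruction_errors hk hh
    (he.of_le (by norm_cast; omega)) hdeg₁ hdeg₂ hinterp₁ hinterp₂
  have hξξ' : uIcc ξ ξ' ⊆ S :=
    uIcc_subset_Icc ⟨hξ.1.le, by linarith [hξ.2]⟩ ⟨by linarith [hξ'.1], hξ'.2.le⟩
  obtain ⟨c, hcS, hc, hmvt⟩ := exists_iteratedDerivWithin_sub_eq_mul_sub hlt he
    (m := 2 * k - 1) (by omega) (hξξ' left_mem_uIcc) (hξξ' right_mem_uIcc)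
  rw [Nat.sub_add_cancel (by omega)] at hmvt
  set A : ℝ := (k.factorial : ℝ) * (k - 1).factorial / (2 * k).factorial
  have hsum : (derivative Q₁).eval (a + h) + (derivative Q₂).eval (a + h) - 2 * e (a + h)
      = (-1) ^ (k + 1) * h ^ (2 * k - 1) * A * iteratedDerivWithin (2 * k) e S c * (ξ' - ξ) := by
    linear_combination h₁ + h₂ - ((-1) ^ k * h ^ (2 * k - 1) * A) * hmvt
  refine ⟨ξ, hξ, ξ', hξ', c, hc, by linear_combination h₁ - h₂, hsum, ?_⟩
  have hM := abs_le_sSup_image_abs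
    (he.continuousOn_iteratedDerivWithin le_rfl (uniqueDiffOn_Icc hlt)) (hξξ' hcS)
  have hdist : |ξ' - ξ| ≤ 2 * k * h :=
    abs_sub_le_iff.2 ⟨by linarith [hξ.1, hξ'.2], by linarith [hξ.2, hξ'.1]⟩
  rw [hsum, abs_mul, abs_mul, abs_mul, abs_mul, abs_pow, abs_neg, abs_one, one_pow, one_mul,
    abs_of_pos (pow_pos hh _), abs_of_nonneg (by positivity : 0 ≤ A)]
  calc h ^ (2 * k - 1) * A * |iteratedDerivWithin (2 * k) e S c| * |ξ' - ξ|
      ≤ h ^ (2 * k - 1) * A * sSup ((fun x => |iteratedDerivWithin (2 * k) e S x|) '' S)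
          * (2 * k * h) := by
        gcongr
        exact mul_nonneg (by positivity) ((abs_nonneg _).trans hM)
    _ = _ := by rw [← pow_sub_one_mul (by omega : 2 * k ≠ 0) h]; ring
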